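/- arXiv:2204.09814 — 6 statements merged into one kernel-verified Lean document; each statement's English description precedes it below -/
import Mathlib

section
/- Let p be a prime and z a p-integral rational number. If l₁ ≤ l₂ are integers and [z]_{l₁}, [z]_{l₂} are both defined, then ord_p [z]_{l₁} ≥ ord_p [z]_{l₂}. -/
/-- `[z]_l` over `ℚ`. -/
noncomputable def brkQ (z : ℚ) (l : ℤ) : ℚ :=
  if 0 ≤ l then (∏ k ∈ Finset.range l.toNat, (z + (k : ℚ) + 1))⁻¹
  else ∏ k ∈ Finset.range (-l).toNat, (z - (k : ℚ))

/-- `p`-adic order of a rational, with `ord_p 0 = ∞`. -/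
noncomputable def ordQ (p : ℕ) (q : ℚ) : WithTop ℤ :=
  if q = 0 then ⊤ else (padicValRat p q : WithTop ℤ)

lemma ordQ_mul (p : ℕ) (hp : p.Prime) (a b : ℚ) :
    ordQ p (a * b) = ordQ p a + ordQ p b := by
  haveI : Fact p.Prime := ⟨hp⟩
  by_cases ha : a = 0
  · simp [ordQ, ha]
  by_cases hb : b = 0
  · simp [ordQ, hb]
  rw [ordQ, ordQ, ordQ, if_neg (mul_ne_zero ha hb), if_neg ha, if_neg hb,
    padicValRat.mul ha hb]
  push_cast
  rfl

lemma ordQ_nonneg (p : ℕ) (q : ℚ) (hq : ¬ p ∣ q.den) :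
    0 ≤ ordQ p q := by
  by_cases h : q = 0
  · simp [ordQ, h]
  rw [ordQ, if_neg h]
  have : padicValNat p q.den = 0 := padicValNat.eq_zero_of_not_dvd hq
  have h2 : (0 : ℤ) ≤ padicValRat p q := by
    rw [padicValRat_def, this]
    simp
  exact_mod_cast h2

lemma brkQ_succ (z : ℚ) (l : ℤ) (h : 0 ≤ l → z + l + 1 ≠ 0) :
    brkQ z l = brkQ z (l + 1) * (z + (l : ℚ) + 1) := by
  rcases le_or_gt 0 l with hl | hl
  · have h1 : (0:ℤ) ≤ l + 1 := by omega
    rw [brkQ, brkQ, if_pos hl, if_pos h1]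
    have : (l + 1).toNat = l.toNat + 1 := by omega
    rw [this, Finset.prod_range_succ, mul_inv]
    have hcast : ((l.toNat : ℚ)) = (l : ℚ) := by exact_mod_cast Int.toNat_of_nonneg hl
    rw [hcast, mul_assoc, inv_mul_cancel₀ (h hl), mul_one]
  · rw [brkQ, brkQ, if_neg (by omega)]
    rcases eq_or_lt_of_le (by omega : l + 1 ≤ 0) with h0 | h0
    · rw [if_pos (le_of_eq h0.symm)]
      have hl1 : l = -1 := by omega
      subst hl1
      simp
    · rw [if_neg (by omega)]
      have : (-l).toNat = (-(l+1)).toNat + 1 := by omega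
      rw [this, Finset.prod_range_succ]
      congr 1
      have : ((((-(l+1)).toNat : ℚ))) = -(l:ℚ) - 1 := by
        rw [← Int.cast_natCast, Int.toNat_of_nonneg (by omega : (0:ℤ) ≤ -(l+1))]
        push_cast; ring
      rw [this]
      ring

lemma den_add_int (z : ℚ) (c : ℤ) (p : ℕ) (hp : p.Prime) (hz : ¬ p ∣ z.den) :
    ¬ p ∣ (z + (c : ℚ)).den := by
  intro h
  have hd : (z + (c : ℚ)).den ∣ z.den * (c : ℚ).den := Rat.add_den_dvd z c
  have : (c : ℚ).den = 1 := Rat.den_intCast c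
  rw [this, mul_one] at hd
  exact hz (h.trans hd)

/-- If `z` is `p`-integral and `l₁ ≤ l₂`, with `[z]_{l₁}`, `[z]_{l₂}` defined, then
`ord_p [z]_{l₁} ≥ ord_p [z]_{l₂}`. -/
theorem ord_brk_antitone (p : ℕ) (hp : p.Prime) (z : ℚ) (hz : ¬ p ∣ z.den)
    (l₁ l₂ : ℤ) (hle : l₁ ≤ l₂)
    (hdef : ∀ k : ℤ, 1 ≤ k → k ≤ l₂ → z ≠ -(k : ℚ)) :
    ordQ p (brkQ z l₂) ≤ ordQ p (brkQ z l₁) := by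
  -- single step
  have step : ∀ l : ℤ, l + 1 ≤ l₂ → ordQ p (brkQ z (l + 1)) ≤ ordQ p (brkQ z l) := by
    intro l hl
    have hne : 0 ≤ l → z + l + 1 ≠ 0 := by
      intro h0 habs
      have h1 : z = -((l + 1 : ℤ) : ℚ) := by push_cast; linarith
      exact hdef (l + 1) (by omega) hl h1
    rw [brkQ_succ z l hne, ordQ_mul p hp]
    have hnn : 0 ≤ ordQ p (z + (l : ℚ) + 1) := by
      have := den_add_int z (l + 1) p hp hz
      push_cast at this
      rw [← add_assoc] at this
      exact ordQ_nonneg p _ this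
    exact le_add_of_nonneg_right hnn
  -- induction
  have main : ∀ n : ℕ, ordQ p (brkQ z l₂) ≤ ordQ p (brkQ z (l₂ - n)) := by
    intro n
    induction n with
    | zero => simp
    | succ m ih =>
      refine ih.trans ?_
      have h := step (l₂ - (m + 1)) (by omega)
      have e : l₂ - (m + 1 : ℤ) + 1 = l₂ - m := by ring
      rw [e] at h
      have e2 : ((m + 1 : ℕ) : ℤ) = (m : ℤ) + 1 := by push_cast; ring
      rw [e2]
      exact h
  have := main (l₂ - l₁).toNat
  have e : l₂ - ((l₂ - l₁).toNat : ℤ) = l₁ := by omega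
  rwa [e] at this
end

section
/- Let b be a p-adic integer and l a nonnegative integer. Then ord_p (b)_l ≥ (l - s_l)/(p-1), where (b)_l = b(b+1)⋯(b+l-1) is the Pochhammer symbol and s_l is the sum of the base-p digits of l. -/
open scoped Classical

/-- `p`-adic order on `ℤ_[p]`, with `ord 0 = ∞`, valued in `WithTop ℚ`. -/
noncomputable def ordZp {p : ℕ} [Fact p.Prime] (x : ℤ_[p]) : WithTop ℚ :=
  if x = 0 then ⊤ else ((x.valuation : ℚ) : WithTop ℚ)

lemma natCast_prod_range (p : ℕ) [Fact p.Prime] (n l : ℕ) :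
    (∏ k ∈ Finset.range l, ((n : ℤ_[p]) + (k : ℤ_[p]))) = ((n.ascFactorial l : ℕ) : ℤ_[p]) := by
  induction l with
  | zero => simp
  | succ l ih =>
    rw [Finset.prod_range_succ, ih, Nat.ascFactorial_succ]
    push_cast
    ring

lemma norm_pochhammer_le (p : ℕ) [Fact p.Prime] (b : ℤ_[p]) (l : ℕ) :
    ‖∏ k ∈ Finset.range l, (b + (k : ℤ_[p]))‖ ≤ (p : ℝ) ^ (-(padicValNat p l.factorial : ℤ)) := by
  set c : ℝ := (p : ℝ) ^ (-(padicValNat p l.factorial : ℤ)) with hc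
  have hS : IsClosed {x : ℤ_[p] | ‖∏ k ∈ Finset.range l, (x + (k : ℤ_[p]))‖ ≤ c} := by
    have hcont : Continuous fun x : ℤ_[p] => ‖∏ k ∈ Finset.range l, (x + (k : ℤ_[p]))‖ := by
      apply Continuous.norm
      exact continuous_finset_prod _ fun k _ => by continuity
    exact IsClosed.preimage hcont isClosed_Iic
  have hnorm_fact : ‖((l.factorial : ℕ) : ℤ_[p])‖ = c := by
    have h0 : ((l.factorial : ℕ) : ℚ_[p]) ≠ 0 := by
      exact_mod_cast Nat.cast_ne_zero.mpr l.factorial_ne_zero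
    rw [PadicInt.norm_def]
    push_cast
    rw [Padic.norm_eq_zpow_neg_valuation h0, Padic.valuation_natCast]
  have hrange : Set.range (Nat.cast : ℕ → ℤ_[p]) ⊆
      {x : ℤ_[p] | ‖∏ k ∈ Finset.range l, (x + (k : ℤ_[p]))‖ ≤ c} := by
    rintro _ ⟨n, rfl⟩
    show ‖∏ k ∈ Finset.range l, ((n : ℤ_[p]) + (k : ℤ_[p]))‖ ≤ c
    rw [natCast_prod_range]
    obtain ⟨d, hd⟩ := Nat.factorial_dvd_ascFactorial n l
    rw [hd]
    push_cast
    rw [norm_mul]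
    calc ‖((l.factorial : ℕ) : ℤ_[p])‖ * ‖(d : ℤ_[p])‖
        ≤ ‖((l.factorial : ℕ) : ℤ_[p])‖ * 1 :=
          mul_le_mul_of_nonneg_left (PadicInt.norm_le_one _) (norm_nonneg _)
      _ = c := by rw [mul_one, hnorm_fact]
  have hb : b ∈ closure (Set.range (Nat.cast : ℕ → ℤ_[p])) :=
    PadicInt.denseRange_natCast b
  exact closure_minimal hrange hS hb

/-- For `b ∈ ℤ_p` and `l ≥ 0`, `ord_p (b)_l ≥ (l - s_l)/(p-1)`, where `s_l` is the
sum of the base-`p` digits of `l`. -/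
theorem ord_pochhammer_ge (p : ℕ) [Fact p.Prime] (b : ℤ_[p]) (l : ℕ) :
    (((l : ℚ) - ((Nat.digits p l).sum : ℚ)) / ((p : ℚ) - 1) : WithTop ℚ) ≤
      ordZp (∏ k ∈ Finset.range l, (b + (k : ℤ_[p]))) := by
  have hp : p.Prime := Fact.out
  set m := padicValNat p l.factorial with hm
  -- LHS equals m
  have hleg : (p - 1) * m = l - (Nat.digits p l).sum := sub_one_mul_padicValNat_factorial l
  have hdig : (Nat.digits p l).sum ≤ l := Nat.digit_sum_le p l
  have hp1 : (1 : ℕ) ≤ p := hp.one_lt.le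
  have hlegQ : ((p : ℚ) - 1) * m = (l : ℚ) - ((Nat.digits p l).sum : ℚ) := by
    have h2 : (((p - 1) * m : ℕ) : ℚ) = (((l - (Nat.digits p l).sum : ℕ)) : ℚ) := by
      exact_mod_cast hleg
    rw [Nat.cast_mul, Nat.cast_sub hp1, Nat.cast_sub hdig] at h2
    simpa using h2
  have hpne : (p : ℚ) - 1 ≠ 0 := by
    have : (2 : ℚ) ≤ p := by exact_mod_cast hp.two_le
    linarith
  have hLHS : ((l : ℚ) - ((Nat.digits p l).sum : ℚ)) / ((p : ℚ) - 1) = (m : ℚ) := by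
    rw [← hlegQ, mul_comm, mul_div_assoc, div_self hpne, mul_one]
  rw [hLHS]
  unfold ordZp
  split_ifs with h0
  · exact le_top
  · have hnorm := norm_pochhammer_le p b l
    have hval : (m : ℤ) ≤ (∏ k ∈ Finset.range l, (b + (k : ℤ_[p]))).valuation :=
      by exact_mod_cast (PadicInt.norm_le_pow_iff_le_valuation _ h0 m).mp hnorm
    exact_mod_cast WithTop.coe_le_coe.mpr (by exact_mod_cast hval)
end

section
/- Let A = {a_1,...,a_N} ⊆ ℤⁿ lie on an affine hyperplane w(u)=1 for a rational linear form w, let σ be a closed face of the cone -C(A), let Q ∈ ℚA, M = (Q+ℤA) ∩ σ°, and suppose β = ∑_j v_j a_j ∈ M with v_j ∈ ℚ_{≤0} attains w(β) = max{w(u) : u ∈ M}. Then -1 ≤ v_j ≤ 0 for all j. -/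
open Filter

private lemma mem_intrinsicInterior_iff'' {V : Type*} [NormedAddCommGroup V] [NormedSpace ℝ V]
    {s : Set V} {x : V} :
    x ∈ intrinsicInterior ℝ s ↔ x ∈ (affineSpan ℝ s : Set V) ∧
      ∃ ε > 0, ∀ y ∈ (affineSpan ℝ s : Set V), dist y x < ε → y ∈ s := by
  rw [mem_intrinsicInterior]
  constructor
  · rintro ⟨y, hy, rfl⟩
    refine ⟨y.2, ?_⟩
    rw [mem_interior_iff_mem_nhds, Metric.mem_nhds_iff] at hy
    obtain ⟨ε, hε, hball⟩ := hy
    refine ⟨ε, hε, fun z hz hdz => ?_⟩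
    have : (⟨z, hz⟩ : affineSpan ℝ s) ∈ Metric.ball y ε := by
      rw [Metric.mem_ball, Subtype.dist_eq]
      exact hdz
    exact hball this
  · rintro ⟨hx, ε, hε, h⟩
    refine ⟨⟨x, hx⟩, ?_, rfl⟩
    rw [mem_interior_iff_mem_nhds, Metric.mem_nhds_iff]
    refine ⟨ε, hε, fun z hz => ?_⟩
    rw [Metric.mem_ball, Subtype.dist_eq] at hz
    exact h z z.2 hz

private lemma combo_mem_intrinsicInterior' {V : Type*} [NormedAddCommGroup V] [NormedSpace ℝ V]
    {s : Set V} (hconv : Convex ℝ s) {x z : V}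
    (hx : x ∈ intrinsicInterior ℝ s) (hz : z ∈ s) {t : ℝ} (ht0 : 0 < t) (ht1 : t ≤ 1) :
    t • x + (1 - t) • z ∈ intrinsicInterior ℝ s := by
  rw [mem_intrinsicInterior_iff''] at hx ⊢
  obtain ⟨hxspan, ε, hε, hball⟩ := hx
  have hzspan : z ∈ (affineSpan ℝ s : Set V) := subset_affineSpan ℝ s hz
  have hpspan : t • x + (1 - t) • z ∈ (affineSpan ℝ s : Set V) := by
    have heq : t • x + (1 - t) • z = t • (x -ᵥ z) +ᵥ z := by
      rw [vsub_eq_sub, vadd_eq_add]; module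
    rw [heq]
    exact AffineSubspace.smul_vsub_vadd_mem _ t hxspan hzspan hzspan
  refine ⟨hpspan, t * ε, by positivity, fun q hq hdq => ?_⟩
  set p := t • x + (1 - t) • z with hp
  set x' := x + t⁻¹ • (q - p) with hx'
  have hx'span : x' ∈ (affineSpan ℝ s : Set V) := by
    have hd : q - p ∈ (affineSpan ℝ s).direction :=
      AffineSubspace.vsub_mem_direction hq hpspan
    have h2 : t⁻¹ • (q - p) ∈ (affineSpan ℝ s).direction := Submodule.smul_mem _ _ hd
    have := AffineSubspace.vadd_mem_of_mem_direction h2 hxspan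
    simpa [vadd_eq_add, add_comm] using this
  have hdist : dist x' x < ε := by
    rw [hx', dist_eq_norm]
    have h3 : x + t⁻¹ • (q - p) - x = t⁻¹ • (q - p) := by abel
    rw [h3, norm_smul, norm_inv, Real.norm_eq_abs, abs_of_pos ht0]
    rw [dist_eq_norm] at hdq
    rw [inv_mul_lt_iff₀ ht0]
    linarith [hdq]
  have hx's : x' ∈ s := hball x' hx'span hdist
  have hq' : q = t • x' + (1 - t) • z := by
    rw [hx', hp]
    have ht : t • (t⁻¹ • (q - (t • x + (1 - t) • z))) = q - (t • x + (1 - t) • z) := by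
      rw [smul_smul, mul_inv_cancel₀ ht0.ne', one_smul]
    rw [smul_add, ht]
    abel
  rw [hq']
  exact hconv hx's hz ht0.le (by linarith) (by ring)

/-- Let `A = {a_1,…,a_N} ⊆ ℤⁿ` lie on the hyperplane `w = 1`, `σ` a closed (exposed) face of
the negative cone `-C(A)`, `Q ∈ ℚA`, `M = (Q+ℤA) ∩ σ°`, and `β = ∑ v_j a_j ∈ M` with
`v_j ∈ ℚ_{≤0}` of maximal weight in `M`.  Then `-1 ≤ v_j ≤ 0` for all `j`. -/
theorem v_coords_in_Icc (n N : ℕ) (a : Fin N → Fin n → ℤ) (w : Fin n → ℚ)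
    (hw : ∀ j, ∑ i, w i * (a j i : ℚ) = 1)
    (negC : Set (Fin n → ℝ))
    (hnegC : negC = {x | ∃ c : Fin N → ℝ, (∀ j, 0 ≤ c j) ∧
      x = ∑ j, c j • (fun i => (-(a j i) : ℝ))})
    (σ : Set (Fin n → ℝ)) (hσsub : σ ⊆ negC) (hσ : IsExposed ℝ negC σ)
    (Q : Fin n → ℚ) (hQ : ∃ q : Fin N → ℚ, Q = ∑ j, q j • (fun i => (a j i : ℚ)))
    (M : Set (Fin n → ℝ))
    (hM : M = {x | (∃ m : Fin N → ℤ,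
        x = (fun i => (Q i : ℝ)) + ∑ j, m j • (fun i => (a j i : ℝ))) ∧
      x ∈ intrinsicInterior ℝ σ})
    (v : Fin N → ℚ) (hv : ∀ j, v j ≤ 0)
    (β : Fin n → ℝ) (hβ : β = ∑ j, (v j : ℝ) • (fun i => (a j i : ℝ)))
    (hβM : β ∈ M)
    (hmax : ∀ u ∈ M, ∑ i, (w i : ℝ) * u i ≤ ∑ i, (w i : ℝ) * β i) :
    ∀ j, -1 ≤ v j ∧ v j ≤ 0 := by
  intro k
  refine ⟨?_, hv k⟩
  by_contra hk
  push_neg at hk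
  -- hk : v k < -1
  set A : Fin N → Fin n → ℝ := fun j i => (a j i : ℝ) with hA
  have hAj : ∀ j : Fin N, (fun i => ((a j i : ℝ))) = A j := fun j => rfl
  -- membership criterion for negC
  have mem_negC : ∀ d : Fin N → ℝ, (∀ j, d j ≤ 0) → (∑ j, d j • A j) ∈ negC := by
    intro d hd
    rw [hnegC]
    refine ⟨fun j => -d j, fun j => by dsimp only; linarith [hd j], ?_⟩
    apply Finset.sum_congr rfl
    intro j _
    funext i
    simp only [Pi.smul_apply, smul_eq_mul, hA]
    ring
  -- negC is convex
  have hconvC : Convex ℝ negC := by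
    rw [hnegC]
    rintro x ⟨c, hc, rfl⟩ y ⟨d, hd, rfl⟩ s t hs ht hst
    refine ⟨fun j => s * c j + t * d j, fun j => by dsimp only; exact add_nonneg (mul_nonneg hs (hc j)) (mul_nonneg ht (hd j)), ?_⟩
    rw [Finset.smul_sum, Finset.smul_sum, ← Finset.sum_add_distrib]
    apply Finset.sum_congr rfl
    intro j _
    rw [add_smul, smul_smul, smul_smul]
  have hconvσ : Convex ℝ σ := hσ.convex hconvC
  rw [hM] at hβM hmax
  obtain ⟨⟨m, hm⟩, hβint⟩ := hβM
  have hβσ : β ∈ σ := intrinsicInterior_subset hβint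
  obtain ⟨l, hl⟩ := hσ ⟨β, hβσ⟩
  -- the positive gap
  set d : ℝ := -((v k : ℝ) + 1) with hd
  have hd0 : 0 < d := by
    have : (v k : ℝ) < -1 := by exact_mod_cast hk
    simp [hd]; linarith
  -- the two auxiliary points
  set z : Fin n → ℝ := β + (1 + d) • A k with hz
  set y : Fin n → ℝ := β - A k with hy
  -- z ∈ negC
  have hβsum : β = ∑ j, (v j : ℝ) • A j := by rw [hβ]
  have hzC : z ∈ negC := by
    have hzeq : z = ∑ j, ((v j : ℝ) + if j = k then 1 + d else 0) • A j := by
      rw [hz, hβsum]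
      rw [show (∑ j, ((v j : ℝ) + if j = k then 1 + d else 0) • A j)
          = ∑ j, ((v j : ℝ) • A j + (if j = k then 1 + d else 0) • A j) from
        Finset.sum_congr rfl fun j _ => add_smul _ _ _]
      rw [Finset.sum_add_distrib]
      congr 1
      rw [show (∑ j, (if j = k then 1 + d else 0) • A j)
          = ∑ j, (if j = k then (1 + d) • A j else 0) from
        Finset.sum_congr rfl fun j _ => by split <;> simp]
      simp
    rw [hzeq]
    apply mem_negC
    intro j
    by_cases hjk : j = k
    · subst hjk
      rw [if_pos rfl, hd]
      linarith
    · rw [if_neg hjk, add_zero]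
      exact_mod_cast hv j
  -- y ∈ negC
  have hyC : y ∈ negC := by
    have hyeq : y = ∑ j, ((v j : ℝ) - if j = k then (1:ℝ) else 0) • A j := by
      rw [hy, hβsum]
      rw [show (∑ j, ((v j : ℝ) - if j = k then (1:ℝ) else 0) • A j)
          = ∑ j, ((v j : ℝ) • A j - (if j = k then (1:ℝ) else 0) • A j) from
        Finset.sum_congr rfl fun j _ => sub_smul _ _ _]
      rw [Finset.sum_sub_distrib]
      congr 1
      rw [show (∑ j, (if j = k then (1:ℝ) else 0) • A j)
          = ∑ j, (if j = k then (1 : ℝ) • A j else 0) from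
        Finset.sum_congr rfl fun j _ => by split <;> simp]
      simp
    rw [hyeq]
    apply mem_negC
    intro j
    by_cases hjk : j = k
    · rw [if_pos hjk]
      have h0 : (v j : ℝ) ≤ 0 := by exact_mod_cast hv j
      linarith
    · rw [if_neg hjk, sub_zero]
      exact_mod_cast hv j
  -- β is a proper convex combination of z and y
  set t₂ : ℝ := 1 / (2 + d) with ht₂
  have ht₂0 : 0 < t₂ := by rw [ht₂]; positivity
  have ht₂1 : t₂ < 1 := by
    rw [ht₂, div_lt_one (by linarith)]
    linarith
  have hβcombo : t₂ • z + (1 - t₂) • y = β := by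
    have key : t₂ * (1 + d) - (1 - t₂) = 0 := by
      rw [ht₂]
      field_simp
      ring
    have expand : t₂ • z + (1 - t₂) • y = β + (t₂ * (1 + d) - (1 - t₂)) • A k := by
      rw [hz, hy]; module
    rw [expand, key, zero_smul, add_zero]
  -- face argument: z ∈ σ
  have hβface := hβσ
  rw [hl] at hβface
  obtain ⟨hβC, hβmax⟩ := hβface
  have hlz : l z ≤ l β := hβmax z hzC
  have hly : l y ≤ l β := hβmax y hyC
  have hlβ : l β = t₂ * l z + (1 - t₂) * l y := by
    rw [← hβcombo]
    simp [map_add, map_smul]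
  have hlzβ : l β ≤ l z := by nlinarith
  have hzσ : z ∈ σ := by
    rw [hl]
    exact ⟨hzC, fun u hu => le_trans (hβmax u hu) hlzβ⟩
  -- β + A k is on the open segment from β (intrinsic interior) to z (in σ)
  set t : ℝ := d / (1 + d) with ht
  have ht0 : 0 < t := by rw [ht]; positivity
  have ht1 : t ≤ 1 := by
    rw [ht, div_le_one (by linarith)]
    linarith
  have hseg : t • β + (1 - t) • z = β + A k := by
    have key : (1 - t) * (1 + d) = 1 := by
      rw [ht]
      field_simp
      ring
    have expand : t • β + (1 - t) • z = β + ((1 - t) * (1 + d)) • A k := by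
      rw [hz]; module
    rw [expand, key, one_smul]
  have hβ'int : β + A k ∈ intrinsicInterior ℝ σ := by
    rw [← hseg]
    exact combo_mem_intrinsicInterior' hconvσ hβint hzσ ht0 ht1
  -- β + A k ∈ M
  have hβ'M : β + A k ∈ {x : Fin n → ℝ | (∃ m : Fin N → ℤ,
        x = (fun i => (Q i : ℝ)) + ∑ j, m j • (fun i => (a j i : ℝ))) ∧
      x ∈ intrinsicInterior ℝ σ} := by
    refine ⟨⟨fun j => m j + if j = k then 1 else 0, ?_⟩, hβ'int⟩
    simp only [hAj]
    rw [show (∑ j, (m j + if j = k then 1 else 0) • A j)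
        = ∑ j, (m j • A j + (if j = k then (1 : ℤ) else 0) • A j) from
      Finset.sum_congr rfl fun j _ => add_smul _ _ _]
    rw [Finset.sum_add_distrib]
    rw [show (∑ j, (if j = k then (1 : ℤ) else 0) • A j)
        = ∑ j, (if j = k then (1 : ℤ) • A j else 0) from
      Finset.sum_congr rfl fun j _ => by split <;> simp]
    simp only [Finset.sum_ite_eq', Finset.mem_univ, if_true, one_smul]
    rw [hm]
    simp only [hAj]
    abel
  -- weight contradiction
  have hwk : ∑ i, (w i : ℝ) * (a k i : ℝ) = 1 := by exact_mod_cast hw k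
  have hle := hmax (β + A k) hβ'M
  have hsum : ∑ i, (w i : ℝ) * (β + A k) i = (∑ i, (w i : ℝ) * β i) + 1 := by
    rw [← hwk, ← Finset.sum_add_distrib]
    apply Finset.sum_congr rfl
    intro i _
    simp [hA]
    ring
  rw [hsum] at hle
  linarith
end

section
/- With A, w, σ, M, and weight-maximizing β = ∑ v_j a_j (v_j ∈ [-1,0]) as above: if u ∈ M and u = ∑_{j=1}^N (v_j + l_j) a_j with l_j ∈ ℤ satisfying l_j ≥ 0 whenever v_j = 0, then additionally l_j ≤ 0 whenever v_j = -1. -/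
open Set Filter Topology

variable {V : Type*} [AddCommGroup V] [Module ℝ V] [TopologicalSpace V]

lemma mem_intrinsicInterior_iff' {s : Set V} {z : V} :
    z ∈ intrinsicInterior ℝ s ↔
      z ∈ affineSpan ℝ s ∧ s ∈ 𝓝[(affineSpan ℝ s : Set V)] z := by
  constructor
  · rintro ⟨y, hy, rfl⟩
    refine ⟨y.2, ?_⟩
    have h1 : ((↑) ⁻¹' s : Set <| affineSpan ℝ s) ∈ 𝓝 y := mem_interior_iff_mem_nhds.1 hy
    have h2 : Subtype.val '' ((↑) ⁻¹' s : Set <| affineSpan ℝ s) ∈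
        Filter.map Subtype.val (𝓝 y) := Filter.image_mem_map h1
    rw [map_nhds_subtype_val] at h2
    exact Filter.mem_of_superset h2 (image_preimage_subset _ _)
  · rintro ⟨hz, hs⟩
    refine ⟨⟨z, hz⟩, ?_, rfl⟩
    rw [mem_interior_iff_mem_nhds, nhds_subtype_eq_comap]
    obtain ⟨t, ht_open, hzt, hts⟩ := mem_nhdsWithin.1 hs
    refine Filter.mem_of_superset (Filter.preimage_mem_comap (ht_open.mem_nhds hzt)) ?_
    exact fun p hp => hts ⟨hp, p.2⟩

lemma shift_mem_intrinsicInterior [IsTopologicalAddGroup V] [ContinuousConstSMul ℝ V]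
    {s : Set V} (h0 : (0 : V) ∈ s) {y : V} (hy : y ∈ s) {δ : ℝ} (hδ : 0 < δ)
    (hmap : ∀ x ∈ s, y + δ • x ∈ s) {u : V} (hu : u ∈ intrinsicInterior ℝ s) :
    y + δ • u ∈ intrinsicInterior ℝ s := by
  obtain ⟨huS, hunhds⟩ := mem_intrinsicInterior_iff'.1 hu
  have h0S : (0 : V) ∈ affineSpan ℝ s := subset_affineSpan ℝ s h0
  have hyS : y ∈ affineSpan ℝ s := subset_affineSpan ℝ s hy
  have hfwd : ∀ x ∈ affineSpan ℝ s, y + δ • x ∈ affineSpan ℝ s := by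
    intro x hx
    have := AffineSubspace.smul_vsub_vadd_mem (affineSpan ℝ s) δ hx h0S hyS
    simpa [vsub_eq_sub, vadd_eq_add, add_comm] using this
  have hbwd : ∀ p ∈ affineSpan ℝ s, δ⁻¹ • (p - y) ∈ affineSpan ℝ s := by
    intro p hp
    have := AffineSubspace.smul_vsub_vadd_mem (affineSpan ℝ s) δ⁻¹ hp hyS h0S
    simpa [vsub_eq_sub, vadd_eq_add] using this
  rw [mem_intrinsicInterior_iff']
  refine ⟨hfwd u huS, ?_⟩
  obtain ⟨t, ht_open, hut, hts⟩ := mem_nhdsWithin.1 hunhds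
  rw [mem_nhdsWithin]
  refine ⟨(fun p => δ⁻¹ • (p - y)) ⁻¹' t, ?_, ?_, ?_⟩
  · exact ht_open.preimage ((continuous_id.sub continuous_const).const_smul _)
  · show δ⁻¹ • (y + δ • u - y) ∈ t
    simpa [smul_smul, inv_mul_cancel₀ hδ.ne'] using hut
  · rintro p ⟨hpt, hpS⟩
    have hx : δ⁻¹ • (p - y) ∈ s := hts ⟨hpt, hbwd p hpS⟩
    have : y + δ • (δ⁻¹ • (p - y)) ∈ s := hmap _ hx
    simpa [smul_smul, mul_inv_cancel₀ hδ.ne'] using this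


/-- With `A`, `w`, `σ`, `M`, and a weight-maximizing `β = ∑ v_j a_j` (`v_j ∈ [-1,0]`):
if `u ∈ M` and `u = ∑ (v_j + l_j) a_j` with `l_j ∈ ℤ` satisfying `l_j ≥ 0` whenever
`v_j = 0`, then moreover `l_j ≤ 0` whenever `v_j = -1`. -/
theorem l_nonpos_of_v_eq_neg_one (n N : ℕ) (a : Fin N → Fin n → ℤ) (w : Fin n → ℚ)
    (hw : ∀ j, ∑ i, w i * (a j i : ℚ) = 1)
    (negC : Set (Fin n → ℝ))
    (hnegC : negC = {x | ∃ c : Fin N → ℝ, (∀ j, 0 ≤ c j) ∧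
      x = ∑ j, c j • (fun i => (-(a j i) : ℝ))})
    (σ : Set (Fin n → ℝ)) (hσsub : σ ⊆ negC) (hσ : IsExposed ℝ negC σ)
    (Q : Fin n → ℚ) (hQ : ∃ q : Fin N → ℚ, Q = ∑ j, q j • (fun i => (a j i : ℚ)))
    (M : Set (Fin n → ℝ))
    (hM : M = {x | (∃ m : Fin N → ℤ,
        x = (fun i => (Q i : ℝ)) + ∑ j, m j • (fun i => (a j i : ℝ))) ∧
      x ∈ intrinsicInterior ℝ σ})
    (v : Fin N → ℚ) (hv : ∀ j, -1 ≤ v j ∧ v j ≤ 0)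
    (β : Fin n → ℝ) (hβ : β = ∑ j, (v j : ℝ) • (fun i => (a j i : ℝ)))
    (hβM : β ∈ M)
    (hmax : ∀ u ∈ M, ∑ i, (w i : ℝ) * u i ≤ ∑ i, (w i : ℝ) * β i)
    (u : Fin n → ℝ) (huM : u ∈ M)
    (l : Fin N → ℤ) (hl0 : ∀ j, v j = 0 → 0 ≤ l j)
    (hu : u = ∑ j, ((v j : ℝ) + (l j : ℝ)) • (fun i => (a j i : ℝ))) :
    ∀ j, v j = -1 → l j ≤ 0 := by
  intro k hk
  by_contra hlk
  push_neg at hlk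
  -- basic casts
  have hvR : ∀ j, (-1 : ℝ) ≤ (v j : ℝ) ∧ (v j : ℝ) ≤ 0 := by
    intro j; constructor
    · exact_mod_cast (hv j).1
    · exact_mod_cast (hv j).2
  have hvkR : (v k : ℝ) = -1 := by exact_mod_cast congrArg (fun q : ℚ => (q : ℝ)) hk
  have hlkR : (1 : ℝ) ≤ (l k : ℝ) := by exact_mod_cast hlk
  have hwR : ∀ j, ∑ i, (w i : ℝ) * (a j i : ℝ) = 1 := by
    intro j
    have := congrArg (fun q : ℚ => (q : ℝ)) (hw j)
    push_cast at this
    exact this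
  -- negC closure properties
  have sum_mem : ∀ c : Fin N → ℝ, (∀ j, 0 ≤ c j) →
      ∑ j, c j • (fun i => (-(a j i) : ℝ)) ∈ negC := by
    intro c hc; rw [hnegC]; exact ⟨c, hc, rfl⟩
  have negA_mem : ∀ j, (fun i => (-(a j i) : ℝ)) ∈ negC := by
    intro j
    have := sum_mem (fun j' => if j' = j then 1 else 0) (by intro j'; positivity)
    simpa [ite_smul] using this
  have h0C : (0 : Fin n → ℝ) ∈ negC := by
    have := sum_mem 0 (fun j => le_refl 0)
    simpa using this
  have add_mem : ∀ {x y : Fin n → ℝ}, x ∈ negC → y ∈ negC → x + y ∈ negC := by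
    intro x y hx hy
    rw [hnegC] at hx hy ⊢
    obtain ⟨c1, hc1, rfl⟩ := hx
    obtain ⟨c2, hc2, rfl⟩ := hy
    exact ⟨c1 + c2, fun j => add_nonneg (hc1 j) (hc2 j), by
      rw [← Finset.sum_add_distrib]
      exact Finset.sum_congr rfl fun j _ => by simp [add_smul]⟩
  have smul_mem : ∀ (t : ℝ), 0 ≤ t → ∀ {x : Fin n → ℝ}, x ∈ negC → t • x ∈ negC := by
    intro t ht x hx
    rw [hnegC] at hx ⊢
    obtain ⟨c1, hc1, rfl⟩ := hx
    exact ⟨fun j => t * c1 j, fun j => mul_nonneg ht (hc1 j), by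
      rw [Finset.smul_sum]
      exact Finset.sum_congr rfl fun j _ => by simp [smul_smul]⟩
  -- β as a nonnegative combination
  have hβneg : β = ∑ j, (-(v j : ℝ)) • (fun i => (-(a j i) : ℝ)) := by
    rw [hβ]
    refine Finset.sum_congr rfl fun j _ => ?_
    ext i
    simp only [Pi.smul_apply, smul_eq_mul]
    ring
  have hβC : β ∈ negC := hβneg ▸ sum_mem _ (fun j => by linarith [(hvR j).2])
  have hβσ : β ∈ σ := intrinsicInterior_subset (by rw [hM] at hβM; exact hβM.2)
  obtain ⟨f, hfσ⟩ := hσ ⟨β, hβσ⟩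
  have hβσ' : β ∈ negC ∧ ∀ y ∈ negC, f y ≤ f β := by rw [hfσ] at hβσ; exact hβσ
  have hfle : ∀ x ∈ negC, f x ≤ f β := hβσ'.2
  have hfβ0 : f β = 0 := by
    have h1 : (0 : ℝ) ≤ f β := by simpa using hfle 0 h0C
    have h2 : f (β + β) ≤ f β := hfle _ (add_mem hβC hβC)
    rw [map_add] at h2
    linarith
  have hσ_iff : ∀ x, x ∈ σ ↔ x ∈ negC ∧ f x = 0 := by
    intro x
    rw [hfσ]
    constructor
    · rintro ⟨hx, hmaxx⟩
      refine ⟨hx, le_antisymm (hfβ0 ▸ hfle x hx) ?_⟩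
      simpa using hmaxx 0 h0C
    · rintro ⟨hx, hfx⟩
      exact ⟨hx, fun y hy => by rw [hfx]; rw [← hfβ0]; exact hfle y hy⟩
  -- f vanishes on a k
  have hfnegA : ∀ j, f (fun i => (-(a j i) : ℝ)) ≤ 0 := fun j => hfβ0 ▸ hfle _ (negA_mem j)
  have hfAk : f (fun i => ((a k i) : ℝ)) = 0 := by
    have hsum : ∑ j, (-(v j : ℝ)) * f (fun i => (-(a j i) : ℝ)) = 0 := by
      rw [← hfβ0, hβneg, map_sum]
      exact Finset.sum_congr rfl fun j _ => by rw [map_smul]; rfl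
    have hterm := (Finset.sum_eq_zero_iff_of_nonpos
      (s := (Finset.univ : Finset (Fin N)))
      (f := fun j => (-(v j : ℝ)) * f (fun i => (-(a j i) : ℝ)))
      (fun j _ =>
        mul_nonpos_iff.2 (Or.inl ⟨by linarith [(hvR j).2], hfnegA j⟩))).1 hsum k
        (Finset.mem_univ k)
    rw [hvkR] at hterm
    have hneg : f (fun i => (-(a k i) : ℝ)) = 0 := by linarith
    have heq : (fun i => (-(a k i) : ℝ)) = -(fun i => ((a k i) : ℝ)) := rfl
    rw [heq, map_neg] at hneg
    linarith
  -- u facts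
  rw [hM] at huM hβM
  have huσ : u ∈ σ := intrinsicInterior_subset huM.2
  have huC : u ∈ negC := ((hσ_iff u).1 huσ).1
  have hfu : f u = 0 := ((hσ_iff u).1 huσ).2
  -- choice of δ
  set g : Fin N → ℝ := fun j =>
    if (v j : ℝ) < 0 then (-(v j : ℝ)) / (1 + |(v j : ℝ) + (l j : ℝ)|) else 1 with hg_def
  set δ : ℝ := Finset.univ.inf' (⟨k, Finset.mem_univ k⟩ : Finset.univ.Nonempty) g with hδ_def
  have hδpos : 0 < δ := by
    rw [hδ_def]; refine (Finset.lt_inf'_iff _).2 ?_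
    intro j _
    rw [hg_def]
    dsimp only
    split_ifs with h
    · exact div_pos (by linarith) (by positivity)
    · norm_num
  have hδle : ∀ j, (v j : ℝ) < 0 → δ * (1 + |(v j : ℝ) + (l j : ℝ)|) ≤ -(v j : ℝ) := by
    intro j hj
    have h1 : δ ≤ g j := Finset.inf'_le g (Finset.mem_univ j)
    rw [hg_def] at h1
    dsimp only at h1
    rw [if_pos hj] at h1
    have hpos : (0 : ℝ) < 1 + |(v j : ℝ) + (l j : ℝ)| := by positivity
    calc δ * (1 + |(v j : ℝ) + (l j : ℝ)|)
        ≤ (-(v j : ℝ)) / (1 + |(v j : ℝ) + (l j : ℝ)|) * (1 + |(v j : ℝ) + (l j : ℝ)|) :=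
          mul_le_mul_of_nonneg_right h1 hpos.le
      _ = -(v j : ℝ) := div_mul_cancel₀ _ hpos.ne'
  -- the auxiliary cone point y
  set c : Fin N → ℝ :=
    fun j => δ * ((v j : ℝ) + (l j : ℝ)) - (v j : ℝ) - (if j = k then 1 else 0) with hc_def
  have hc : ∀ j, 0 ≤ c j := by
    intro j
    rw [hc_def]
    dsimp only
    by_cases hjk : j = k
    · subst hjk
      rw [if_pos rfl, hvkR]
      nlinarith
    · rw [if_neg hjk]
      by_cases hv0 : v j = 0
      · have hvj0 : (v j : ℝ) = 0 := by exact_mod_cast congrArg (fun q : ℚ => (q : ℝ)) hv0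
        have hlj : (0 : ℝ) ≤ (l j : ℝ) := by exact_mod_cast hl0 j hv0
        rw [hvj0]
        nlinarith
      · have hvlt : (v j : ℝ) < 0 := lt_of_le_of_ne (hvR j).2 (by exact_mod_cast hv0)
        have h1 := hδle j hvlt
        have h2 : -(1 + |(v j : ℝ) + (l j : ℝ)|) ≤ (v j : ℝ) + (l j : ℝ) := by
          have := neg_abs_le ((v j : ℝ) + (l j : ℝ)); linarith
        have h3 := mul_le_mul_of_nonneg_left h2 hδpos.le
        rw [mul_neg] at h3
        linarith
  set y : Fin n → ℝ := ∑ j, c j • (fun i => (-(a j i) : ℝ)) with hy_def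
  have hyC : y ∈ negC := sum_mem c hc
  have hy_eq : y = β + (fun i => ((a k i) : ℝ)) - δ • u := by
    rw [hy_def, hβ, hu]
    ext i
    simp only [Finset.sum_apply, Pi.add_apply, Pi.sub_apply, Pi.smul_apply, smul_eq_mul]
    rw [Finset.mul_sum]
    have hAk : ((a k i : ℤ) : ℝ) =
        ∑ j, (if j = k then (1 : ℝ) else 0) * ((a j i : ℤ) : ℝ) := by
      simp [ite_mul]
    rw [hAk, ← Finset.sum_add_distrib, ← Finset.sum_sub_distrib]
    refine Finset.sum_congr rfl fun j _ => ?_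
    rw [hc_def]
    dsimp only
    ring
  have hfy : f y = 0 := by
    rw [hy_eq, map_sub, map_add, map_smul, hfβ0, hfAk, hfu]
    simp
  have hyσ : y ∈ σ := (hσ_iff y).2 ⟨hyC, hfy⟩
  have h0σ : (0 : Fin n → ℝ) ∈ σ := (hσ_iff 0).2 ⟨h0C, map_zero f⟩
  have hmapσ : ∀ x ∈ σ, y + δ • x ∈ σ := by
    intro x hx
    rw [hσ_iff] at hx ⊢
    refine ⟨add_mem hyC (smul_mem δ hδpos.le hx.1), ?_⟩
    rw [map_add, map_smul, hfy, hx.2]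
    simp
  have hri : y + δ • u ∈ intrinsicInterior ℝ σ :=
    shift_mem_intrinsicInterior h0σ hyσ hδpos hmapσ huM.2
  have hβAk : y + δ • u = β + (fun i => ((a k i) : ℝ)) := by
    rw [hy_eq, sub_add_cancel]
  rw [hβAk] at hri
  -- membership in M
  obtain ⟨m, hm⟩ := hβM.1
  have hmm : β + (fun i => ((a k i) : ℝ)) = (fun i => (Q i : ℝ)) +
      ∑ j, (fun j' => m j' + if j' = k then 1 else 0) j • (fun i => ((a j i) : ℝ)) := by
    rw [hm]
    ext i
    simp only [Finset.sum_apply, Pi.add_apply, Pi.smul_apply, zsmul_eq_mul, Pi.mul_apply,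
      Pi.intCast_apply]
    have hsplit : ∀ x : Fin N,
        (((m x + if x = k then 1 else 0 : ℤ)) : ℝ) * ((a x i : ℤ) : ℝ) =
          ((m x : ℤ) : ℝ) * ((a x i : ℤ) : ℝ) +
            (if x = k then (1 : ℝ) else 0) * ((a x i : ℤ) : ℝ) := by
      intro x
      split_ifs <;> push_cast <;> ring
    rw [Finset.sum_congr rfl fun x _ => hsplit x, Finset.sum_add_distrib]
    have hAk : ∑ j, (if j = k then (1 : ℝ) else 0) * ((a j i : ℤ) : ℝ)
        = ((a k i : ℤ) : ℝ) := by
      simp [ite_mul]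
    rw [hAk]
    ring
  have hMβAk : β + (fun i => ((a k i) : ℝ)) ∈ M := by
    rw [hM]
    exact ⟨⟨fun j' => m j' + if j' = k then 1 else 0, hmm⟩, hri⟩
  have hcontra := hmax _ hMβAk
  have hexp : ∑ i, (w i : ℝ) * ((β + fun i => ((a k i) : ℝ)) i)
      = ∑ i, (w i : ℝ) * β i + ∑ i, (w i : ℝ) * ((a k i : ℤ) : ℝ) := by
    rw [← Finset.sum_add_distrib]
    refine Finset.sum_congr rfl fun i _ => ?_
    simp only [Pi.add_apply]
    ring
  rw [hexp, hwR k] at hcontra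
  linarith
end

section
/- Let 0 < θ₁, θ₂, θ₃ < 1 be real numbers. Then ⌊1-θ₁+x₁+x₂⌋ + ⌊1-θ₂+x₂-x₁⌋ + ⌊1-θ₃+x₁-x₂⌋ ≥ 0 for all x₁, x₂ ∈ [0,1) if and only if either θ₂+θ₃ ≤ 1, or both θ₁+θ₂ ≤ 1 and θ₁+θ₃ ≤ 1. -/
/-- `⌊1-θ₁+x₁+x₂⌋ + ⌊1-θ₂+x₂-x₁⌋ + ⌊1-θ₃+x₁-x₂⌋ ≥ 0` for all `x₁, x₂ ∈ [0,1)` iff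
either `θ₂+θ₃ ≤ 1`, or both `θ₁+θ₂ ≤ 1` and `θ₁+θ₃ ≤ 1`. -/
theorem floor_sum_nonneg_iff (θ₁ θ₂ θ₃ : ℝ)
    (h₁ : 0 < θ₁) (h₁' : θ₁ < 1) (h₂ : 0 < θ₂) (h₂' : θ₂ < 1) (h₃ : 0 < θ₃) (h₃' : θ₃ < 1) :
    (∀ x₁ x₂ : ℝ, 0 ≤ x₁ → x₁ < 1 → 0 ≤ x₂ → x₂ < 1 →
        0 ≤ ⌊1 - θ₁ + x₁ + x₂⌋ + ⌊1 - θ₂ + x₂ - x₁⌋ + ⌊1 - θ₃ + x₁ - x₂⌋) ↔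
      (θ₂ + θ₃ ≤ 1 ∨ (θ₁ + θ₂ ≤ 1 ∧ θ₁ + θ₃ ≤ 1)) := by
  constructor
  · intro h
    by_contra hc
    push_neg at hc
    obtain ⟨hA, hB⟩ := hc
    rcases lt_or_ge 1 (θ₁ + θ₂) with hB | hB'
    · -- 1 < θ₁ + θ₂ : take x₁ = (1-θ₂ + min θ₁ θ₃)/2, x₂ = 0
      set m := min θ₁ θ₃ with hm
      have hm1 : m ≤ θ₁ := min_le_left _ _
      have hm2 : m ≤ θ₃ := min_le_right _ _
      have hm3 : 1 - θ₂ < m := lt_min (by linarith) (by linarith)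
      have hm0 : 0 < m := lt_min h₁ h₃
      set x : ℝ := (1 - θ₂ + m) / 2 with hx
      have hx0 : 0 ≤ x := by rw [hx]; linarith
      have hx1 : x < 1 := by
        have : m < 1 := lt_of_le_of_lt hm1 h₁'
        rw [hx]; linarith
      have hxa : x < θ₁ := by rw [hx]; linarith
      have hxc : x < θ₃ := by rw [hx]; linarith
      have hxb : 1 - θ₂ < x := by rw [hx]; linarith
      have H := h x 0 hx0 hx1 le_rfl one_pos
      have f1 : ⌊1 - θ₁ + x + 0⌋ < 1 := by
        rw [Int.floor_lt]; push_cast; linarith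
      have f2 : ⌊1 - θ₂ + 0 - x⌋ < 0 := by
        rw [Int.floor_lt]; push_cast; linarith
      have f3 : ⌊1 - θ₃ + x - 0⌋ < 1 := by
        rw [Int.floor_lt]; push_cast; linarith
      omega
    · -- 1 < θ₁ + θ₃ : take
      have hB2 : 1 < θ₁ + θ₃ := hB hB'
      set m := min θ₁ θ₂ with hm
      have hm1 : m ≤ θ₁ := min_le_left _ _
      have hm2 : m ≤ θ₂ := min_le_right _ _
      have hm3 : 1 - θ₃ < m := lt_min (by linarith) (by linarith)
      have hm0 : 0 < m := lt_min h₁ h₂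
      set x : ℝ := (1 - θ₃ + m) / 2 with hx
      have hx0 : 0 ≤ x := by rw [hx]; linarith
      have hx1 : x < 1 := by
        have : m < 1 := lt_of_le_of_lt hm1 h₁'
        rw [hx]; linarith
      have hxa : x < θ₁ := by rw [hx]; linarith
      have hxc : x < θ₂ := by rw [hx]; linarith
      have hxb : 1 - θ₃ < x := by rw [hx]; linarith
      have H := h 0 x le_rfl one_pos hx0 hx1
      have f1 : ⌊1 - θ₁ + 0 + x⌋ < 1 := by
        rw [Int.floor_lt]; push_cast; linarith
      have f2 : ⌊1 - θ₂ + x - 0⌋ < 1 := by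
        rw [Int.floor_lt]; push_cast; linarith
      have f3 : ⌊1 - θ₃ + 0 - x⌋ < 0 := by
        rw [Int.floor_lt]; push_cast; linarith
      omega
  · intro hc x₁ x₂ hx₁ hx₁' hx₂ hx₂'
    rcases hc with hc | ⟨hc1, hc2⟩
    · -- θ₂ + θ₃ ≤ 1 : first floor ≥ 0, second+third ≥ 0
      have f1 : (0:ℤ) ≤ ⌊1 - θ₁ + x₁ + x₂⌋ := by
        rw [Int.le_floor]; push_cast; linarith
      have g2 := Int.lt_floor_add_one (1 - θ₂ + x₂ - x₁)
      have g3 := Int.lt_floor_add_one (1 - θ₃ + x₁ - x₂)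
      have : (-1:ℝ) < (⌊1 - θ₂ + x₂ - x₁⌋ : ℝ) + (⌊1 - θ₃ + x₁ - x₂⌋ : ℝ) := by
        linarith
      have h23 : (-1:ℤ) < ⌊1 - θ₂ + x₂ - x₁⌋ + ⌊1 - θ₃ + x₁ - x₂⌋ := by
        exact_mod_cast this
      omega
    · -- θ₁+θ₂ ≤ 1 and θ₁+θ₃ ≤ 1
      by_cases hs2 : 0 ≤ 1 - θ₂ + x₂ - x₁
      · by_cases hs3 : 0 ≤ 1 - θ₃ + x₁ - x₂
        · have f1 : (0:ℤ) ≤ ⌊1 - θ₁ + x₁ + x₂⌋ := by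
            rw [Int.le_floor]; push_cast; linarith
          have f2 : (0:ℤ) ≤ ⌊1 - θ₂ + x₂ - x₁⌋ := by
            rw [Int.le_floor]; push_cast; linarith
          have f3 : (0:ℤ) ≤ ⌊1 - θ₃ + x₁ - x₂⌋ := by
            rw [Int.le_floor]; push_cast; linarith
          omega
        · -- third term is -1, then x₂ - x₁ > 1 - θ₃ ≥ θ₁
          push_neg at hs3
          have f1 : (1:ℤ) ≤ ⌊1 - θ₁ + x₁ + x₂⌋ := by
            rw [Int.le_floor]; push_cast; linarith
          have f3 : (-1:ℤ) ≤ ⌊1 - θ₃ + x₁ - x₂⌋ := by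
            rw [Int.le_floor]; push_cast; linarith
          have f2 : (0:ℤ) ≤ ⌊1 - θ₂ + x₂ - x₁⌋ := by
            rw [Int.le_floor]; push_cast; linarith
          omega
      · -- second term is -1, then x₁ - x₂ > 1 - θ₂ ≥ θ₁
        push_neg at hs2
        have f1 : (1:ℤ) ≤ ⌊1 - θ₁ + x₁ + x₂⌋ := by
          rw [Int.le_floor]; push_cast; linarith
        have f2 : (-1:ℤ) ≤ ⌊1 - θ₂ + x₂ - x₁⌋ := by
          rw [Int.le_floor]; push_cast; linarith
        have f3 : (0:ℤ) ≤ ⌊1 - θ₃ + x₁ - x₂⌋ := by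
          rw [Int.le_floor]; push_cast; linarith
        omega
end

section
/- Let C{t₁,...,t_N} denote the set of formal series ∑_{l∈ℤ^N} c_l t^l with c_l ∈ ℂ_p such that |c_l|·δ^{|l|∞} → 0 for every 0 < δ < 1, where |l|∞ = ∑_j |l_j|. Let H(t) = ∑_{m∈ℕ^N} d_m t^m be a power series with |d_m|·R^{∑ m_j} → 0 for some R > 1. Then the formal product H(t)·ξ(t) is well-defined (each coefficient series converges) and lies in C{t₁,...,t_N} for every ξ ∈ C{t₁,...,t_N}. -/
open Filter Topology

/-- Multiplication by a power series `H(t) = ∑_{m∈ℕ^N} d_m t^m` converging on a polydisk of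
radius `R > 1` maps `C{t₁,…,t_N}` into itself: if `‖c_l‖ δ^{|l|∞} → 0` for every `δ < 1`
and `‖d_m‖ R^{∑ m_j} → 0`, then each product coefficient `e_k = ∑_{m∈ℕ^N} d_m c_{k-m}`
converges, and the resulting series satisfies `‖e_k‖ δ^{|k|∞} → 0` for every `δ < 1`. -/
theorem mul_maps_C_into_C (K : Type*) [NormedField K] [CompleteSpace K]
    (hna : ∀ x y : K, ‖x + y‖ ≤ max ‖x‖ ‖y‖)
    (N : ℕ) (c : (Fin N → ℤ) → K)
    (hc : ∀ δ : ℝ, 0 < δ → δ < 1 →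
      Tendsto (fun l : Fin N → ℤ => ‖c l‖ * δ ^ (∑ j, (l j).natAbs)) cofinite (𝓝 0))
    (d : (Fin N → ℕ) → K) (R : ℝ) (hR : 1 < R)
    (hd : Tendsto (fun m : Fin N → ℕ => ‖d m‖ * R ^ (∑ j, m j)) cofinite (𝓝 0)) :
    (∀ k : Fin N → ℤ, Summable fun m : Fin N → ℕ => d m * c (fun j => k j - (m j : ℤ))) ∧
      ∀ δ : ℝ, 0 < δ → δ < 1 →
        Tendsto (fun k : Fin N → ℤ =>
            ‖∑' m : Fin N → ℕ, d m * c (fun j => k j - (m j : ℤ))‖ * δ ^ (∑ j, (k j).natAbs))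
          cofinite (𝓝 0) := by
  haveI : IsUltrametricDist K :=
    IsUltrametricDist.isUltrametricDist_of_forall_norm_add_le_max_norm hna
  have hR0 : (0:ℝ) < R := one_pos.trans hR
  set A : (Fin N → ℕ) → ℝ := fun m => ‖d m‖ * R ^ (∑ j, m j) with hAdef
  have hA0 : ∀ m, 0 ≤ A m := fun m => by positivity
  obtain ⟨BA, hBA⟩ : ∃ B, ∀ m, A m ≤ B := by
    obtain ⟨B, hB⟩ := hd.bddAbove_range_of_cofinite
    exact ⟨B, fun m => hB ⟨m, rfl⟩⟩
  have hBA0 : 0 ≤ BA := (hA0 (fun _ => 0)).trans (hBA _)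
  -- the key pointwise inequality, valid whenever `R * δ ≥ 1`
  have key : ∀ δ : ℝ, 0 < δ → δ ≤ 1 → 1 ≤ R * δ → ∀ (k : Fin N → ℤ) (m : Fin N → ℕ),
      ‖d m * c (fun j => k j - (m j : ℤ))‖ * δ ^ (∑ j, (k j).natAbs) ≤
        A m * (‖c (fun j => k j - (m j : ℤ))‖ *
          δ ^ (∑ j, (k j - (m j : ℤ)).natAbs)) := by
    intro δ hδ0 hδ1 hRδ k m
    rw [norm_mul]
    have hle : (∑ j, (k j - (m j : ℤ)).natAbs) ≤ (∑ j, (k j).natAbs) + ∑ j, m j := by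
      rw [← Finset.sum_add_distrib]
      refine Finset.sum_le_sum fun j _ => ?_
      calc (k j - (m j : ℤ)).natAbs ≤ (k j).natAbs + ((m j : ℤ)).natAbs :=
            Int.natAbs_sub_le _ _
        _ = (k j).natAbs + m j := by simp
    have h1 : δ ^ (∑ j, (k j).natAbs) ≤
        R ^ (∑ j, m j) * δ ^ (∑ j, (k j - (m j : ℤ)).natAbs) := by
      calc δ ^ (∑ j, (k j).natAbs) = δ ^ (∑ j, (k j).natAbs) * 1 := (mul_one _).symm
        _ ≤ δ ^ (∑ j, (k j).natAbs) * (R * δ) ^ (∑ j, m j) :=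
            mul_le_mul_of_nonneg_left (one_le_pow₀ hRδ) (by positivity)
        _ = R ^ (∑ j, m j) * δ ^ ((∑ j, (k j).natAbs) + ∑ j, m j) := by
            rw [mul_pow, pow_add]; ring
        _ ≤ R ^ (∑ j, m j) * δ ^ (∑ j, (k j - (m j : ℤ)).natAbs) :=
            mul_le_mul_of_nonneg_left (pow_le_pow_of_le_one hδ0.le hδ1 hle) (by positivity)
    calc ‖d m‖ * ‖c (fun j => k j - (m j : ℤ))‖ * δ ^ (∑ j, (k j).natAbs)
        ≤ ‖d m‖ * ‖c (fun j => k j - (m j : ℤ))‖ *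
          (R ^ (∑ j, m j) * δ ^ (∑ j, (k j - (m j : ℤ)).natAbs)) :=
          mul_le_mul_of_nonneg_left h1 (by positivity)
      _ = A m * (‖c (fun j => k j - (m j : ℤ))‖ *
          δ ^ (∑ j, (k j - (m j : ℤ)).natAbs)) := by rw [hAdef]; ring
  -- a convenient δ₀ with 1/R < δ₀ < 1
  have hRinv : R⁻¹ < 1 := inv_lt_one_of_one_lt₀ hR
  have hRinv0 : 0 < R⁻¹ := by positivity
  set δ₀ : ℝ := (1 + R⁻¹) / 2 with hδ₀def
  have hδ₀0 : 0 < δ₀ := by positivity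
  have hδ₀1 : δ₀ < 1 := by rw [hδ₀def]; linarith
  have hRδ₀ : 1 ≤ R * δ₀ := by
    have : R⁻¹ < δ₀ := by rw [hδ₀def]; linarith
    calc (1:ℝ) = R * R⁻¹ := by field_simp
      _ ≤ R * δ₀ := by nlinarith
  constructor
  · -- summability of each coefficient
    intro k
    obtain ⟨BC, hBC⟩ : ∃ B, ∀ l : Fin N → ℤ, ‖c l‖ * δ₀ ^ (∑ j, (l j).natAbs) ≤ B := by
      obtain ⟨B, hB⟩ := (hc δ₀ hδ₀0 hδ₀1).bddAbove_range_of_cofinite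
      exact ⟨B, fun l => hB ⟨l, rfl⟩⟩
    set P : ℝ := δ₀ ^ (∑ j, (k j).natAbs) with hPdef
    have hP0 : 0 < P := by positivity
    apply NonarchimedeanAddGroup.summable_of_tendsto_cofinite_zero
    refine tendsto_zero_iff_norm_tendsto_zero.mpr ?_
    refine squeeze_zero (fun m => norm_nonneg _)
      (g := fun m => A m * (BC / P)) (fun m => ?_) ?_
    · have h2 : ‖d m * c (fun j => k j - (m j : ℤ))‖ * P ≤ A m * BC :=
        (key δ₀ hδ₀0 hδ₀1.le hRδ₀ k m).trans
          (mul_le_mul_of_nonneg_left (hBC _) (hA0 m))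
      calc ‖d m * c (fun j => k j - (m j : ℤ))‖
          = ‖d m * c (fun j => k j - (m j : ℤ))‖ * P / P :=
            (mul_div_cancel_right₀ _ hP0.ne').symm
        _ ≤ A m * BC / P := by gcongr
        _ = A m * (BC / P) := mul_div_assoc _ _ _
    · simpa using hd.mul_const (BC / P)
  · -- decay of the product coefficients
    intro δ hδ0 hδ1
    set δ₁ : ℝ := max δ δ₀ with hδ₁def
    have hδ₁0 : 0 < δ₁ := lt_of_lt_of_le hδ0 (le_max_left _ _)
    have hδ₁1 : δ₁ < 1 := max_lt hδ1 hδ₀1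
    have hRδ₁ : 1 ≤ R * δ₁ :=
      hRδ₀.trans (mul_le_mul_of_nonneg_left (le_max_right _ _) hR0.le)
    set Cf : (Fin N → ℤ) → ℝ := fun l => ‖c l‖ * δ₁ ^ (∑ j, (l j).natAbs) with hCfdef
    have hCf0 : ∀ l, 0 ≤ Cf l := fun l => by positivity
    obtain ⟨BC, hBC⟩ : ∃ B, ∀ l, Cf l ≤ B := by
      obtain ⟨B, hB⟩ := (hc δ₁ hδ₁0 hδ₁1).bddAbove_range_of_cofinite
      exact ⟨B, fun l => hB ⟨l, rfl⟩⟩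
    have hBC0 : 0 ≤ BC := (hCf0 (fun _ => 0)).trans (hBC _)
    have main : Tendsto (fun k : Fin N → ℤ =>
        ‖∑' m : Fin N → ℕ, d m * c (fun j => k j - (m j : ℤ))‖ *
          δ₁ ^ (∑ j, (k j).natAbs)) cofinite (𝓝 0) := by
      rw [Metric.tendsto_nhds]
      intro ε hε
      have hε2 : 0 < ε / 2 := by positivity
      have hSf : {m : Fin N → ℕ | ¬ A m < ε / 2 / (BC + 1)}.Finite :=
        eventually_cofinite.mp (hd.eventually_lt_const (by positivity))
      have hTf : {l : Fin N → ℤ | ¬ Cf l < ε / 2 / (BA + 1)}.Finite :=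
        eventually_cofinite.mp
          ((hc δ₁ hδ₁0 hδ₁1).eventually_lt_const (by positivity))
      set bad : Set (Fin N → ℤ) :=
        ⋃ m ∈ {m : Fin N → ℕ | ¬ A m < ε / 2 / (BC + 1)},
          (fun l : Fin N → ℤ => fun j => l j + (m j : ℤ)) ''
            {l : Fin N → ℤ | ¬ Cf l < ε / 2 / (BA + 1)} with hbaddef
      have hbadfin : bad.Finite := hSf.biUnion fun m _ => hTf.image _
      rw [eventually_cofinite]
      refine hbadfin.subset fun k hk => ?_
      by_contra hkb
      apply hk
      rw [Real.dist_0_eq_abs, abs_of_nonneg (by positivity)]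
      -- every term is small
      have hterm : ∀ m : Fin N → ℕ,
          ‖d m * c (fun j => k j - (m j : ℤ))‖ * δ₁ ^ (∑ j, (k j).natAbs) ≤ ε / 2 := by
        intro m
        refine (key δ₁ hδ₁0 hδ₁1.le hRδ₁ k m).trans ?_
        by_cases hm : A m < ε / 2 / (BC + 1)
        · calc A m * Cf (fun j => k j - (m j : ℤ)) ≤ (ε / 2 / (BC + 1)) * (BC + 1) :=
              mul_le_mul hm.le ((hBC _).trans (by linarith)) (hCf0 _) (by positivity)
            _ = ε / 2 := div_mul_cancel₀ _ (by positivity)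
        · have hknotin : Cf (fun j => k j - (m j : ℤ)) < ε / 2 / (BA + 1) := by
            by_contra hcon
            exact hkb (Set.mem_biUnion hm
              ⟨fun j => k j - (m j : ℤ), hcon, by funext j; ring⟩)
          calc A m * Cf (fun j => k j - (m j : ℤ)) ≤ (BA + 1) * (ε / 2 / (BA + 1)) :=
              mul_le_mul ((hBA m).trans (by linarith)) hknotin.le (hCf0 _) (by positivity)
            _ = ε / 2 := by rw [mul_comm]; exact div_mul_cancel₀ _ (by positivity)
      have hP0 : (0:ℝ) < δ₁ ^ (∑ j, (k j).natAbs) := by positivity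
      have htsum : ‖∑' m : Fin N → ℕ, d m * c (fun j => k j - (m j : ℤ))‖ ≤
          ε / 2 / δ₁ ^ (∑ j, (k j).natAbs) := by
        refine IsUltrametricDist.norm_tsum_le_of_forall_le_of_nonneg (by positivity)
          fun m => ?_
        rw [le_div_iff₀ hP0]
        exact hterm m
      calc ‖∑' m : Fin N → ℕ, d m * c (fun j => k j - (m j : ℤ))‖ *
            δ₁ ^ (∑ j, (k j).natAbs)
          ≤ (ε / 2 / δ₁ ^ (∑ j, (k j).natAbs)) * δ₁ ^ (∑ j, (k j).natAbs) :=
            mul_le_mul_of_nonneg_right htsum hP0.le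
        _ = ε / 2 := div_mul_cancel₀ _ hP0.ne'
        _ < ε := by linarith
    refine squeeze_zero (fun k => by positivity) (fun k => ?_) main
    exact mul_le_mul_of_nonneg_left
      (pow_le_pow_left₀ hδ0.le (le_max_left _ _) _) (norm_nonneg _)
end
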